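/- (Theorem 2, claim (iii): upper bound on the complexity of selected structures.) Assume Conditions (A1), (A2) and (A3′), and assume κ ≥ (2ν+2α+3)/(2α). Then, with M₀′ = 2κα, for every θ ∈ Θ and every M ≥ 0, E_θ[ Σ_{ I ∈ 𝓘 : ρ(I) ≥ M₀′ ρ(I_o) + M } p̂_I ] ≤ C_ν e^{−M/2}, where I_o is the oracle structure of θ. -/

import Mathlib

/-! Both weights satisfy
`p̂_I(y) ≤ min (1, exp (crit I_o y - crit I y)) ≤ exp (α (crit I_o y - crit I y))`, where `crit`
is the selection criterion scaled by `1/(2σ²)` and `I_o` the oracle. Projecting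
onto `L_{I'} = L_{I_o} + L_I` splits the excess criterion into a bias part, at most `ρ(I)` by
the oracle inequality and `ρ(I') ≤ ρ(I_o) + ρ(I)`, and a noise part `‖P_{I'} ξ‖²`, whose
`α`-exponential moment is at most `e^{d_{I'}} ≤ e^{ρ(I_o) + ρ(I)}`. When
`ρ(I) ≥ 2κα ρ(I_o) + M` the resulting exponent is at most `-νρ(I) - M/2`, and (A2) sums these. -/

open MeasureTheory Real

/-- The orthogonal projection onto a linear subspace of `ℝ^N`, as a map `ℝ^N → ℝ^N`. -/
noncomputable def proj {N : ℕ} (K : Submodule ℝ (EuclideanSpace ℝ (Fin N))) :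
    EuclideanSpace ℝ (Fin N) →L[ℝ] EuclideanSpace ℝ (Fin N) :=
  K.subtypeL.comp (K.orthogonalProjectionOnto)

theorem proj_eq_starProjection {N : ℕ} (K : Submodule ℝ (EuclideanSpace ℝ (Fin N))) :
    proj K = K.starProjection := rfl

theorem min_one_exp_le_exp_mul {a x : ℝ} (ha0 : 0 ≤ a) (ha1 : a ≤ 1) :
    min 1 (exp x) ≤ exp (a * x) := by
  rcases le_total x 0 with hx | hx
  · exact (min_le_right _ _).trans (exp_le_exp.mpr (by nlinarith))
  · exact (min_le_left _ _).trans (one_le_exp (mul_nonneg ha0 hx))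

theorem exp_neg_div_tsum_le_min_one_exp_sub {ι : Type*} (c : ι → ℝ) (i o : ι) :
    exp (-c i) / ∑' j, exp (-c j) ≤ min 1 (exp (c o - c i)) := by
  by_cases hs : Summable fun j => exp (-c j)
  · have hle : ∀ k, exp (-c k) ≤ ∑' j, exp (-c j) :=
      fun k => hs.le_tsum k fun j _ => (exp_pos _).le
    refine le_min ((div_le_one ((exp_pos _).trans_le (hle i))).mpr (hle i)) ?_
    calc exp (-c i) / ∑' j, exp (-c j) ≤ exp (-c i) / exp (-c o) :=
          div_le_div_of_nonneg_left (exp_pos _).le (exp_pos _) (hle o)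
      _ = exp (c o - c i) := by rw [← exp_sub]; ring_nf
  · rw [tsum_eq_zero_of_not_summable hs, div_zero]
    exact le_min zero_le_one (exp_pos _).le

theorem ite_eq_le_min_one_exp_sub {ι : Type*} [DecidableEq ι] {c : ι → ℝ} {m : ι}
    (hm : ∀ j, c m ≤ c j) (i o : ι) :
    (if m = i then (1 : ℝ) else 0) ≤ min 1 (exp (c o - c i)) := by
  split_ifs with h
  · subst h
    exact le_min le_rfl (one_le_exp (sub_nonneg.mpr (hm o)))
  · exact le_min zero_le_one (exp_pos _).le

theorem lintegral_ofReal_exp_mul_exp_le {X : Type*} [MeasurableSpace X] {μ : Measure X}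
    {f : X → ℝ} {a d : ℝ} (h : ∫⁻ x, ENNReal.ofReal (exp (f x)) ∂μ ≤ ENNReal.ofReal (exp d)) :
    ∫⁻ x, ENNReal.ofReal (exp a * exp (f x)) ∂μ ≤ ENNReal.ofReal (exp (a + d)) := by
  simp_rw [ENNReal.ofReal_mul (exp_pos a).le]
  rw [lintegral_const_mul' _ _ ENNReal.ofReal_ne_top, exp_add, ENNReal.ofReal_mul (exp_pos a).le]
  gcongr

theorem lintegral_tsum_le_tsum_lintegral_of_le {X ι : Type*} [MeasurableSpace X] [Countable ι]
    {μ : Measure X} {f g : ι → X → ENNReal} (hg : ∀ i, AEMeasurable (g i) μ)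
    (hfg : ∀ i x, f i x ≤ g i x) :
    ∫⁻ x, ∑' i, f i x ∂μ ≤ ∑' i, ∫⁻ x, g i x ∂μ :=
  (lintegral_mono fun x => ENNReal.tsum_le_tsum fun i => hfg i x).trans_eq (lintegral_tsum hg)

theorem ddm_exponent_le_of_complexity_ge {α ν κ a b M : ℝ} (hα0 : 0 < α) (hα1 : α ≤ 1) (hν : 0 ≤ ν)
    (hκ : (32 * ν + 10 + α) / (4 * α) < κ) (hM : 0 ≤ M) (ha : 0 ≤ a)
    (hab : 2 * κ * α * a + M ≤ b) :
    α * (κ * (a - b) + b) + (a + b) ≤ -ν * b - M / 2 := by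
  have hK : 8 * ν + 5 / 2 + α / 4 < κ * α := by
    rw [div_lt_iff₀ (by positivity)] at hκ; linarith
  -- with `K = κα` the claim reads `(K + 1) a + M/2 ≤ (K - α - 1 - ν) b`, and `K - α - 1 - ν ≥ 3/4`
  have hcoef : 0 ≤ 2 * (κ * α) * (κ * α - α - 1 - ν) - (κ * α + 1) := by nlinarith
  nlinarith [mul_nonneg ha hcoef]

namespace Submodule

variable {E : Type*} [NormedAddCommGroup E] [InnerProductSpace ℝ E] {U V W : Submodule ℝ E}
  [U.HasOrthogonalProjection] [V.HasOrthogonalProjection] [W.HasOrthogonalProjection]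

theorem norm_sub_starProjection_sq_of_le (h : U ≤ V) (y : E) :
    ‖y - U.starProjection y‖ ^ 2 =
      ‖y - V.starProjection y‖ ^ 2 + ‖V.starProjection y - U.starProjection y‖ ^ 2 := by
  have hV : y - V.starProjection y ∈ Vᗮ := sub_starProjection_mem_orthogonal y
  have hVU : V.starProjection y - U.starProjection y ∈ V :=
    sub_mem (V.starProjection_apply_mem y) (h (U.starProjection_apply_mem y))
  rw [← sub_add_sub_cancel y (V.starProjection y), norm_add_sq_real,
    inner_eq_zero_symm.mp (hV _ hVU)]
  ring

theorem norm_starProjection_sub_starProjection_le_of_le (h : U ≤ V) (x : E) :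
    ‖V.starProjection x - U.starProjection x‖ ≤ ‖V.starProjection x‖ := by
  have hU : U.starProjection (V.starProjection x) = U.starProjection x := by
    rw [← ContinuousLinearMap.comp_apply, starProjection_comp_starProjection_of_le h]
  have hUperp : Uᗮ.starProjection (V.starProjection x) =
      V.starProjection x - U.starProjection (V.starProjection x) := by
    rw [starProjection_orthogonal]; rfl
  rw [← hU, ← hUperp]
  exact Uᗮ.norm_starProjection_apply_le _

theorem norm_sub_starProjection_sq_sub_le (hU : U ≤ V) (hW : W ≤ V) (θ y : E) :
    ‖y - U.starProjection y‖ ^ 2 - ‖y - W.starProjection y‖ ^ 2 ≤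
      2 * (‖θ - U.starProjection θ‖ ^ 2 - ‖θ - V.starProjection θ‖ ^ 2) +
        2 * ‖V.starProjection (y - θ)‖ ^ 2 := by
  have hsplit : V.starProjection y - U.starProjection y =
      (V.starProjection θ - U.starProjection θ) +
        (V.starProjection (y - θ) - U.starProjection (y - θ)) := by
    simp only [map_sub]; abel
  have hnoise := norm_starProjection_sub_starProjection_le_of_le hU (y - θ)
  calc ‖y - U.starProjection y‖ ^ 2 - ‖y - W.starProjection y‖ ^ 2
      ≤ ‖y - U.starProjection y‖ ^ 2 - ‖y - V.starProjection y‖ ^ 2 := by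
        rw [norm_sub_starProjection_sq_of_le hW y]
        nlinarith [sq_nonneg ‖V.starProjection y - W.starProjection y‖]
    _ = ‖V.starProjection y - U.starProjection y‖ ^ 2 := by
        rw [norm_sub_starProjection_sq_of_le hU y]; ring
    _ ≤ 2 * (‖V.starProjection θ - U.starProjection θ‖ ^ 2 +
          ‖V.starProjection (y - θ) - U.starProjection (y - θ)‖ ^ 2) := by
        rw [hsplit]
        exact (pow_le_pow_left₀ (norm_nonneg _) (norm_add_le _ _) 2).trans add_sq_le
    _ ≤ _ := by
        rw [norm_sub_starProjection_sq_of_le hU θ]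
        nlinarith [pow_le_pow_left₀ (norm_nonneg _) hnoise 2]

end Submodule

section Selection

variable {N : ℕ} {ι : Type*} (L : ι → Submodule ℝ (EuclideanSpace ℝ (Fin N))) (ρ : ι → ℝ)
  (σ κ : ℝ)

/-- `(‖y - P_I y‖² + 2κσ²ρ(I)) / (2σ²)`: the MA weights are the Gibbs weights `∝ exp (-·)` of
this criterion and `Î` is its minimiser. -/
noncomputable def selectionCriterion (i : ι) (y : EuclideanSpace ℝ (Fin N)) : ℝ :=
  ‖y - proj (L i) y‖ ^ 2 / (2 * σ ^ 2) + κ * ρ i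

variable {L ρ σ κ}

theorem ddm_weight_le_exp_mul_selectionCriterion_sub [DecidableEq ι] (hσ : 0 < σ) {α : ℝ}
    (hα0 : 0 ≤ α) (hα1 : α ≤ 1) {Ihat : EuclideanSpace ℝ (Fin N) → ι}
    (hIhat : ∀ y i, ‖y - proj (L (Ihat y)) y‖ ^ 2 + 2 * κ * σ ^ 2 * ρ (Ihat y)
      ≤ ‖y - proj (L i) y‖ ^ 2 + 2 * κ * σ ^ 2 * ρ i)
    {phat : ι → EuclideanSpace ℝ (Fin N) → ℝ}
    (hphat :
      (∀ i y, phat i y =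
          exp (-κ * ρ i) * exp (-‖y - proj (L i) y‖ ^ 2 / (2 * σ ^ 2)) /
            ∑' j : ι, exp (-κ * ρ j) * exp (-‖y - proj (L j) y‖ ^ 2 / (2 * σ ^ 2))) ∨
        (∀ i y, phat i y = if Ihat y = i then 1 else 0))
    (i o : ι) (y : EuclideanSpace ℝ (Fin N)) :
    phat i y ≤ exp (α * (selectionCriterion L ρ σ κ o y - selectionCriterion L ρ σ κ i y)) := by
  refine le_trans ?_ (min_one_exp_le_exp_mul hα0 hα1)
  rcases hphat with hma | hms
  · have hgibbs (j : ι) : exp (-κ * ρ j) * exp (-‖y - proj (L j) y‖ ^ 2 / (2 * σ ^ 2)) =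
        exp (-selectionCriterion L ρ σ κ j y) := by
      rw [← exp_add, selectionCriterion]
      ring_nf
    simp only [hma, hgibbs]
    exact exp_neg_div_tsum_le_min_one_exp_sub (fun j => selectionCriterion L ρ σ κ j y) i o
  · rw [hms]
    refine ite_eq_le_min_one_exp_sub (c := fun j => selectionCriterion L ρ σ κ j y)
      (fun j => ?_) i o
    have h2σ : 0 < 2 * σ ^ 2 := by positivity
    have hmin := hIhat y j
    simp only [selectionCriterion]
    rw [div_add' _ _ _ h2σ.ne', div_add' _ _ _ h2σ.ne']
    exact div_le_div_of_nonneg_right (by linarith) h2σ.le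

theorem selectionCriterion_sub_le_of_oracle (hσ : 0 < σ) {θ : EuclideanSpace ℝ (Fin N)}
    {o : ι}
    (ho : ∀ j, ‖θ - proj (L o) θ‖ ^ 2 + σ ^ 2 * ρ o ≤ ‖θ - proj (L j) θ‖ ^ 2 + σ ^ 2 * ρ j)
    {i i' : ι} (hsup : L i' = L o ⊔ L i) (hρ' : ρ i' ≤ ρ o + ρ i)
    (y : EuclideanSpace ℝ (Fin N)) :
    selectionCriterion L ρ σ κ o y - selectionCriterion L ρ σ κ i y ≤
      κ * (ρ o - ρ i) + ρ i + ‖proj (L i') (σ⁻¹ • (y - θ))‖ ^ 2 := by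
  have hgeom := Submodule.norm_sub_starProjection_sq_sub_le (hsup ▸ le_sup_left)
    (hsup ▸ le_sup_right) θ y
  simp only [← proj_eq_starProjection] at hgeom
  have hbias : ‖θ - proj (L o) θ‖ ^ 2 - ‖θ - proj (L i') θ‖ ^ 2 ≤ σ ^ 2 * ρ i := by
    nlinarith [ho i', sq_nonneg σ]
  have hnoise : ‖proj (L i') (σ⁻¹ • (y - θ))‖ ^ 2 = ‖proj (L i') (y - θ)‖ ^ 2 / σ ^ 2 := by
    rw [map_smul, norm_smul, mul_pow, norm_inv, Real.norm_eq_abs, abs_of_pos hσ, inv_pow,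
      inv_mul_eq_div]
  rw [hnoise, selectionCriterion, selectionCriterion]
  have h2σ : 0 < 2 * σ ^ 2 := by positivity
  have key : (‖y - proj (L o) y‖ ^ 2 - ‖y - proj (L i) y‖ ^ 2) / (2 * σ ^ 2) ≤
      ρ i + ‖proj (L i') (y - θ)‖ ^ 2 / σ ^ 2 := by
    have hcancel : ‖proj (L i') (y - θ)‖ ^ 2 / σ ^ 2 * (2 * σ ^ 2) =
        2 * ‖proj (L i') (y - θ)‖ ^ 2 := by field_simp
    rw [div_le_iff₀ h2σ, add_mul, hcancel]
    linarith
  rw [sub_div] at key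
  linarith

end Selection

theorem structure_ddm_complexity_upper_bound_general
    {N : ℕ} {ι : Type*} [Countable ι] [DecidableEq ι]
    -- the family of linear subspaces expressing the structures
    (L : ι → Submodule ℝ (EuclideanSpace ℝ (Fin N)))
    -- the parameter set and the data distributions, with mean `θ`
    (Θ : Set (EuclideanSpace ℝ (Fin N)))
    (Pθ : EuclideanSpace ℝ (Fin N) → Measure (EuclideanSpace ℝ (Fin N)))
    (σ : ℝ) (hσ : 0 < σ)
    -- Condition (A1), with `ξ = σ⁻¹(Y − θ)`
    (α : ℝ) (hα0 : 0 < α) (hα1 : α ≤ 1)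
    (d : ι → ℝ)
    (hA1 : ∀ θ ∈ Θ, ∀ i : ι,
      ∫⁻ y, ENNReal.ofReal (exp (α * ‖proj (L i) (σ⁻¹ • (y - θ))‖ ^ 2)) ∂(Pθ θ)
        ≤ ENNReal.ofReal (exp (d i)))
    -- Condition (A2)
    (ν Cν : ℝ) (hν : 0 < ν)
    (ρ : ι → ℝ) (hρ0 : ∀ i, 0 ≤ ρ i)
    (hA2sum : Summable fun i : ι => exp (-ν * ρ i))
    (hA2 : ∑' i : ι, exp (-ν * ρ i) ≤ Cν)
    (hρd : ∀ i, d i ≤ ρ i)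
    -- the DDM tuning parameter
    (κ : ℝ) (hκ : (32 * ν + 10 + α) / (4 * α) < κ)
    -- the structure selector `Î` (a minimizer of the penalized criterion)
    (Ihat : EuclideanSpace ℝ (Fin N) → ι)
    (hIhat : ∀ y i, ‖y - proj (L (Ihat y)) y‖ ^ 2 + 2 * κ * σ ^ 2 * ρ (Ihat y)
      ≤ ‖y - proj (L i) y‖ ^ 2 + 2 * κ * σ ^ 2 * ρ i)
    -- the structure DDM weights: either `π̃(I|Y)` (MA) or `π̌(I|Y) = 1{I = Î}` (MS)
    (phat : ι → EuclideanSpace ℝ (Fin N) → ℝ)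
    (hphat :
      (∀ i y, phat i y =
          exp (-κ * ρ i) * exp (-‖y - proj (L i) y‖ ^ 2 / (2 * σ ^ 2)) /
            ∑' j : ι, exp (-κ * ρ j) * exp (-‖y - proj (L j) y‖ ^ 2 / (2 * σ ^ 2))) ∨
        (∀ i y, phat i y = if Ihat y = i then 1 else 0))
    -- Condition (A3′)
    (hA3' : ∀ i₀ i₁ : ι, ∃ i' i'' : ι, L i' = L i₀ ⊔ L i₁ ∧ L i'' = L i₀ ⊓ L i₁ ∧
      ρ i' ≤ ρ i₀ + ρ i₁ ∧ ρ i'' ≤ ρ i₀)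
    -- the oracle structure `I_o(θ)`, minimizing `I ↦ r²(I,θ) = ‖θ − P_I θ‖² + σ²ρ(I)`
    (Io : EuclideanSpace ℝ (Fin N) → ι)
    (hIo : ∀ θ i, ‖θ - proj (L (Io θ)) θ‖ ^ 2 + σ ^ 2 * ρ (Io θ)
      ≤ ‖θ - proj (L i) θ‖ ^ 2 + σ ^ 2 * ρ i) :
    ∀ θ ∈ Θ, ∀ M : ℝ, 0 ≤ M →
      -- `E_θ[ Σ_{I ∈ 𝓘 : ρ(I) ≥ M₀′ ρ(I_o) + M} p̂_I ]` with `M₀′ = 2κα`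
      ∫⁻ y, (∑' i : ι,
          if 2 * κ * α * ρ (Io θ) + M ≤ ρ i then ENNReal.ofReal (phat i y) else 0) ∂(Pθ θ)
        ≤ ENNReal.ofReal (Cν * exp (-M / 2)) := by
  intro θ hθ M hM
  set o := Io θ
  choose i' _ hsup _ hρ' _ using hA3' o
  set bound : ι → EuclideanSpace ℝ (Fin N) → ℝ := fun i y =>
    exp (α * (κ * (ρ o - ρ i) + ρ i)) * exp (α * ‖proj (L (i' i)) (σ⁻¹ • (y - θ))‖ ^ 2)
  have hphat_le (i y) : phat i y ≤ bound i y := by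
    refine (ddm_weight_le_exp_mul_selectionCriterion_sub hσ hα0.le hα1 hIhat hphat i o y).trans ?_
    simp only [bound, ← exp_add, ← mul_add]
    gcongr
    exact selectionCriterion_sub_le_of_oracle hσ (hIo θ) (hsup i) (hρ' i) y
  have hbound_int (i) (hi : 2 * κ * α * ρ o + M ≤ ρ i) :
      ∫⁻ y, ENNReal.ofReal (bound i y) ∂(Pθ θ) ≤
        ENNReal.ofReal (exp (-ν * ρ i) * exp (-M / 2)) := by
    refine (lintegral_ofReal_exp_mul_exp_le (hA1 θ hθ (i' i))).trans ?_
    rw [← exp_add]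
    refine ENNReal.ofReal_le_ofReal (exp_le_exp.mpr ?_)
    linarith [ddm_exponent_le_of_complexity_ge hα0 hα1 hν.le hκ hM (hρ0 o) hi, hρd (i' i), hρ' i]
  -- `phat i` need not be measurable (`Ihat` is arbitrary), so integrate the continuous `bound i`
  calc _ ≤ ∑' i, ∫⁻ y, (if 2 * κ * α * ρ o + M ≤ ρ i then ENNReal.ofReal (bound i y) else 0)
          ∂(Pθ θ) := by
        refine lintegral_tsum_le_tsum_lintegral_of_le (fun i => ?_) (fun i y => ?_)
        · split_ifs <;> fun_prop
        · split_ifs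
          · exact ENNReal.ofReal_le_ofReal (hphat_le i y)
          · exact le_rfl
    _ ≤ ∑' i, ENNReal.ofReal (exp (-ν * ρ i) * exp (-M / 2)) := by
        refine ENNReal.tsum_le_tsum fun i => ?_
        split_ifs with hi
        · exact hbound_int i hi
        · simp
    _ = ENNReal.ofReal ((∑' i, exp (-ν * ρ i)) * exp (-M / 2)) := by
        rw [← ENNReal.ofReal_tsum_of_nonneg (fun i => by positivity) (hA2sum.mul_right _),
          tsum_mul_right]
    _ ≤ ENNReal.ofReal (Cν * exp (-M / 2)) := by gcongr

/-- **Theorem 2, claim (iii)**: upper bound on the complexity of selected structures. Under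
Conditions (A1), (A2), (A3′) and `κ ≥ (2ν+2α+3)/(2α)`, with `M₀′ = 2κα`, for every `θ ∈ Θ`
and `M ≥ 0`, `E_θ[ Σ_{I : ρ(I) ≥ M₀′ρ(I_o) + M} p̂_I ] ≤ C_ν e^{−M/2}`. -/
theorem structure_ddm_complexity_upper_bound
    {N : ℕ} {ι : Type*} [Countable ι] [DecidableEq ι]
    -- the family of linear subspaces expressing the structures
    (L : ι → Submodule ℝ (EuclideanSpace ℝ (Fin N)))
    -- the parameter set and the data distributions, with mean `θ`
    (Θ : Set (EuclideanSpace ℝ (Fin N)))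
    (Pθ : EuclideanSpace ℝ (Fin N) → Measure (EuclideanSpace ℝ (Fin N)))
    (hP : ∀ θ ∈ Θ, IsProbabilityMeasure (Pθ θ))
    (σ : ℝ) (hσ : 0 < σ)
    (hmean : ∀ θ ∈ Θ, ∫ y, y ∂(Pθ θ) = θ)
    -- Condition (A1), with `ξ = σ⁻¹(Y − θ)`
    (α : ℝ) (hα0 : 0 < α) (hα1 : α ≤ 1)
    (d : ι → ℝ) (hd0 : ∀ i, 0 ≤ d i)
    (hA1 : ∀ θ ∈ Θ, ∀ i : ι,
      ∫⁻ y, ENNReal.ofReal (exp (α * ‖proj (L i) (σ⁻¹ • (y - θ))‖ ^ 2)) ∂(Pθ θ)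
        ≤ ENNReal.ofReal (exp (d i)))
    -- Condition (A2)
    (ν Cν : ℝ) (hν : 0 < ν) (hCν : 0 < Cν)
    (ρ : ι → ℝ) (hρ0 : ∀ i, 0 ≤ ρ i)
    (hA2sum : Summable fun i : ι => exp (-ν * ρ i))
    (hA2 : ∑' i : ι, exp (-ν * ρ i) ≤ Cν)
    (hρd : ∀ i, d i ≤ ρ i)
    -- the DDM tuning parameter
    (κ : ℝ) (hκ : (32 * ν + 10 + α) / (4 * α) < κ)
    -- the structure selector `Î` (a minimizer of the penalized criterion)
    (Ihat : EuclideanSpace ℝ (Fin N) → ι)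
    (hIhat : ∀ y i, ‖y - proj (L (Ihat y)) y‖ ^ 2 + 2 * κ * σ ^ 2 * ρ (Ihat y)
      ≤ ‖y - proj (L i) y‖ ^ 2 + 2 * κ * σ ^ 2 * ρ i)
    -- the structure DDM weights: either `π̃(I|Y)` (MA) or `π̌(I|Y) = 1{I = Î}` (MS)
    (phat : ι → EuclideanSpace ℝ (Fin N) → ℝ)
    (hphat :
      (∀ i y, phat i y =
          exp (-κ * ρ i) * exp (-‖y - proj (L i) y‖ ^ 2 / (2 * σ ^ 2)) /
            ∑' j : ι, exp (-κ * ρ j) * exp (-‖y - proj (L j) y‖ ^ 2 / (2 * σ ^ 2))) ∨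
        (∀ i y, phat i y = if Ihat y = i then 1 else 0))
    -- `κ ≥ (2ν+2α+3)/(2α)`
    (hκ2 : (2 * ν + 2 * α + 3) / (2 * α) ≤ κ)
    -- Condition (A3′)
    (hA3' : ∀ i₀ i₁ : ι, ∃ i' i'' : ι, L i' = L i₀ ⊔ L i₁ ∧ L i'' = L i₀ ⊓ L i₁ ∧
      ρ i' ≤ ρ i₀ + ρ i₁ ∧ ρ i'' ≤ ρ i₀)
    -- the oracle structure `I_o(θ)`, minimizing `I ↦ r²(I,θ) = ‖θ − P_I θ‖² + σ²ρ(I)`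
    (Io : EuclideanSpace ℝ (Fin N) → ι)
    (hIo : ∀ θ i, ‖θ - proj (L (Io θ)) θ‖ ^ 2 + σ ^ 2 * ρ (Io θ)
      ≤ ‖θ - proj (L i) θ‖ ^ 2 + σ ^ 2 * ρ i) :
    ∀ θ ∈ Θ, ∀ M : ℝ, 0 ≤ M →
      -- `E_θ[ Σ_{I ∈ 𝓘 : ρ(I) ≥ M₀′ ρ(I_o) + M} p̂_I ]` with `M₀′ = 2κα`
      ∫⁻ y, (∑' i : ι,
          if 2 * κ * α * ρ (Io θ) + M ≤ ρ i then ENNReal.ofReal (phat i y) else 0) ∂(Pθ θ)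
        ≤ ENNReal.ofReal (Cν * exp (-M / 2)) :=
  structure_ddm_complexity_upper_bound_general L Θ Pθ σ hσ α hα0 hα1 d hA1 ν Cν hν ρ hρ0 hA2sum hA2
    hρd κ hκ Ihat hIhat phat hphat hA3' Io hIo
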